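/- Fix θ ∈ ℝ. Let U ⊆ ℂ∖{0} be a set having 0 as a limit point, and let w : U → ℂ∖{0} and ℓ : U → ℂ be functions such that: (a) w(z) → 0 as z → 0 along U; (b) sup_{z∈U} |ℓ(z) − Log(w(z))| < ∞, where Log is the principal complex logarithm; (c) for every z ∈ U one has z·(1 + 2cos(θ)·w(z)·ℓ(z) − w(z)²) = 2i·w(z). Then, as z → 0 along U, w(z) = z/(2i) − (1/2)cos(θ)·z²·Log(z) + O(z²); that is, there exist C > 0 and δ > 0 such that |w(z) − z/(2i) + (1/2)cos(θ)·z²·Log(z)| ≤ C|z|² for all z ∈ U with |z| < δ. -/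

import Mathlib

/-!
The relation gives `w / z = (1 + 2c·wℓ − w²) / (2i)`, and `wℓ = w·(ℓ − Log w) + w Log w → 0`, so
`w / z → 1 / (2i)`. Hence `|w| ≍ |z|`, so `Log w − Log z = O(1)` and `ℓ = Log z + O(1)`.
Feeding this back, `r := w − z / (2i) = −i c z w ℓ + (i/2) z w² = O(|z|² (1 + |Log z|))`, and the
identity `r + ½ c z² Log z = −i c z r ℓ − ½ c z² (ℓ − Log z) + (i/2) z w²` bounds the left side by
`O(|z|³ (1 + |Log z|)²) + O(|z|²) = O(|z|²)`, because `|z| (1 + |Log z|)² → 0`.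
-/

open Complex Filter Asymptotics Topology
open scoped Real

theorem Complex.norm_log_le_abs_log_norm_add_pi (z : ℂ) : ‖log z‖ ≤ |Real.log ‖z‖| + π := by
  refine (norm_le_abs_re_add_abs_im _).trans ?_
  rw [log_re, log_im]
  exact add_le_add_right (abs_arg_le_pi z) _

theorem Complex.norm_log_sub_log_le {a b : ℂ} (ha : a ≠ 0) (hb : b ≠ 0) :
    ‖log b - log a‖ ≤ |Real.log ‖b / a‖| + 2 * π := by
  refine (norm_le_abs_re_add_abs_im _).trans ?_
  rw [sub_re, sub_im, log_re, log_re, log_im, log_im, norm_div,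
    Real.log_div (norm_ne_zero_iff.2 hb) (norm_ne_zero_iff.2 ha)]
  gcongr
  have := abs_le.1 (abs_arg_le_pi a)
  have := abs_le.1 (abs_arg_le_pi b)
  exact abs_sub_le_iff.2 ⟨by linarith, by linarith⟩

theorem Complex.tendsto_sqrt_norm_mul_one_add_norm_log :
    Tendsto (fun z : ℂ => √‖z‖ * (1 + ‖log z‖)) (𝓝[≠] 0) (𝓝 0) := by
  have hsqrt : Tendsto (fun z : ℂ => √‖z‖) (𝓝[≠] 0) (𝓝 0) :=
    (continuous_norm.sqrt.tendsto' 0 0 (by simp)).mono_left nhdsWithin_le_nhds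
  have hlog : Tendsto (fun z : ℂ => |Real.log ‖z‖ * ‖z‖ ^ (1 / 2 : ℝ)|) (𝓝[≠] 0) (𝓝 0) := by
    simpa using ((tendsto_log_mul_rpow_nhdsGT_zero one_half_pos).comp
      tendsto_norm_nhdsNE_zero).abs
  have hbound : Tendsto (fun z : ℂ => √‖z‖ * (1 + π) + |Real.log ‖z‖ * ‖z‖ ^ (1 / 2 : ℝ)|)
      (𝓝[≠] 0) (𝓝 0) := by
    simpa using (hsqrt.mul_const (1 + π)).add hlog
  refine squeeze_zero (fun z => by positivity) (fun z => ?_) hbound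
  calc √‖z‖ * (1 + ‖log z‖) ≤ √‖z‖ * (1 + (|Real.log ‖z‖| + π)) := by
        gcongr; exact norm_log_le_abs_log_norm_add_pi z
    _ = √‖z‖ * (1 + π) + |Real.log ‖z‖ * ‖z‖ ^ (1 / 2 : ℝ)| := by
        rw [abs_mul, abs_of_nonneg (by positivity : (0:ℝ) ≤ ‖z‖ ^ (1 / 2 : ℝ)),
          ← Real.sqrt_eq_rpow]; ring

theorem Complex.tendsto_norm_mul_one_add_norm_log_sq :
    Tendsto (fun z : ℂ => ‖z‖ * (1 + ‖log z‖) ^ 2) (𝓝[≠] 0) (𝓝 0) := by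
  simpa [mul_pow, Real.sq_sqrt (norm_nonneg _)] using
    tendsto_sqrt_norm_mul_one_add_norm_log.pow 2

section Relation

variable {L : Filter ℂ} {c : ℂ} {w ℓ : ℂ → ℂ}

theorem tendsto_mul_of_isBigO_sub_log (hw : Tendsto w L (𝓝[≠] 0))
    (hℓ : (fun z => ℓ z - log (w z)) =O[L] (fun _ => (1 : ℝ))) :
    Tendsto (fun z => w z * ℓ z) L (𝓝 0) := by
  have hw0 : Tendsto w L (𝓝 0) := hw.mono_right nhdsWithin_le_nhds
  have hbdd : (fun z => w z * (ℓ z - log (w z))) =O[L] (fun z => ‖w z‖) :=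
    ((isBigO_norm_right.2 (isBigO_refl w L)).mul hℓ).congr_right fun z => mul_one _
  have hwlog : Tendsto (fun z => w z * log (w z)) L (𝓝 0) := by
    refine (isBigO_of_le _ fun z => ?_).trans_tendsto
      (tendsto_norm_mul_one_add_norm_log_sq.comp hw)
    rw [Function.comp_apply, norm_mul, Real.norm_of_nonneg (by positivity)]
    gcongr
    nlinarith [norm_nonneg (log (w z))]
  simpa using ((hbdd.trans_tendsto (by simpa using hw0.norm)).add hwlog).congr
    fun z => by ring

theorem tendsto_div_of_relation (hz : L ≤ 𝓝[≠] 0) (hw : Tendsto w L (𝓝 0))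
    (hwℓ : Tendsto (fun z => w z * ℓ z) L (𝓝 0))
    (heq : ∀ᶠ z in L, z * (1 + 2 * c * w z * ℓ z - w z ^ 2) = 2 * I * w z) :
    Tendsto (fun z => w z / z) L (𝓝 (1 / (2 * I))) := by
  have hlim : Tendsto (fun z => (1 + 2 * c * (w z * ℓ z) - w z ^ 2) / (2 * I)) L
      (𝓝 (1 / (2 * I))) := by
    simpa using (((hwℓ.const_mul (2 * c)).const_add 1).sub (hw.pow 2)).div_const (2 * I)
  refine hlim.congr' ?_
  filter_upwards [heq, hz self_mem_nhdsWithin] with z hzw hz0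
  rw [eq_div_iff hz0, div_mul_eq_mul_div, div_eq_iff (by simp)]
  linear_combination hzw

theorem isBigO_log_sub_log_of_tendsto_div {a : ℂ} (ha : a ≠ 0) (hz : L ≤ 𝓝[≠] 0)
    (h : Tendsto (fun z => w z / z) L (𝓝 a)) :
    (fun z => log (w z) - log z) =O[L] (fun _ => (1 : ℝ)) := by
  have hbound : Tendsto (fun z => |Real.log ‖w z / z‖| + 2 * π) L
      (𝓝 (|Real.log ‖a‖| + 2 * π)) :=
    ((Real.continuousAt_log (norm_ne_zero_iff.2 ha)).tendsto.comp h.norm).abs.add_const _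
  refine .trans (.of_bound' ?_) (hbound.isBigO_one ℝ)
  filter_upwards [hz self_mem_nhdsWithin, h.eventually_ne ha] with z hz0 hwz
  rw [Real.norm_of_nonneg (by positivity)]
  exact norm_log_sub_log_le hz0 (left_ne_zero_of_mul hwz)

theorem isBigO_sub_div_of_relation {g : ℂ → ℝ}
    (heq : ∀ᶠ z in L, z * (1 + 2 * c * w z * ℓ z - w z ^ 2) = 2 * I * w z)
    (hw : w =O[L] (‖·‖)) (hwg : w =O[L] g) (hℓ : ℓ =O[L] g) :
    (fun z => w z - z / (2 * I)) =O[L] (fun z => ‖z‖ ^ 2 * g z) := by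
  have hz : (fun z : ℂ => z) =O[L] (‖·‖) := isBigO_norm_right.2 (isBigO_refl _ _)
  have hwℓ := ((hz.mul hw).mul hℓ).const_mul_left (-I * c)
  have hww := ((hz.mul hw).mul hwg).const_mul_left (I / 2)
  refine ((hwℓ.add hww).congr' ?_ .rfl).congr_right fun z => by ring
  filter_upwards [heq] with z hz
  rw [mul_comm 2 I, ← div_div, div_I]
  linear_combination (-I / 2) * hz - w z * I_sq

theorem isBigO_sub_div_add_log_of_bounds {g : ℂ → ℝ}
    (heq : ∀ᶠ z in L, z * (1 + 2 * c * w z * ℓ z - w z ^ 2) = 2 * I * w z)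
    (hz : (‖·‖) =O[L] (fun _ => (1 : ℝ)))
    (hzg : (fun z => ‖z‖ * g z ^ 2) =O[L] (fun _ => (1 : ℝ)))
    (hw : w =O[L] (‖·‖)) (hℓ : ℓ =O[L] g)
    (hℓlog : (fun z => ℓ z - log z) =O[L] (fun _ => (1 : ℝ)))
    (hr : (fun z => w z - z / (2 * I)) =O[L] (fun z => ‖z‖ ^ 2 * g z)) :
    (fun z => w z - z / (2 * I) + 1 / 2 * c * z ^ 2 * log z) =O[L] (fun z => ‖z‖ ^ 2) := by
  have hid : (fun z : ℂ => z) =O[L] (‖·‖) := isBigO_norm_right.2 (isBigO_refl _ _)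
  have hsq : (fun z : ℂ => ‖z‖ ^ 2) =O[L] (fun z => ‖z‖ ^ 2) := isBigO_refl _ _
  have hrℓ : (fun z => z * (w z - z / (2 * I)) * ℓ z) =O[L] (fun z => ‖z‖ ^ 2) :=
    (((hid.mul hr).mul hℓ).congr_right fun z => by ring).trans
      ((hsq.mul hzg).congr_right fun z => mul_one _)
  have hlog : (fun z => z ^ 2 * (ℓ z - log z)) =O[L] (fun z => ‖z‖ ^ 2) :=
    ((hid.pow 2).mul hℓlog).congr_right fun z => mul_one _
  have hww : (fun z => z * w z ^ 2) =O[L] (fun z => ‖z‖ ^ 2) :=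
    (hid.mul (hw.pow 2)).trans ((hz.mul hsq).congr_right fun z => one_mul _)
  refine (((hrℓ.const_mul_left (-I * c)).sub (hlog.const_mul_left (1 / 2 * c))).add
    (hww.const_mul_left (I / 2))).congr' ?_ .rfl
  filter_upwards [heq] with z hz
  rw [mul_comm 2 I, ← div_div, div_I]
  linear_combination (-I / 2) * hz - (w z + c * z ^ 2 * ℓ z / 2) * I_sq

theorem isBigO_sub_div_add_log_of_relation (hz : L ≤ 𝓝[≠] 0) (hw : Tendsto w L (𝓝[≠] 0))
    (hℓ : (fun z => ℓ z - log (w z)) =O[L] (fun _ => (1 : ℝ)))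
    (heq : ∀ᶠ z in L, z * (1 + 2 * c * w z * ℓ z - w z ^ 2) = 2 * I * w z) :
    (fun z => w z - z / (2 * I) + 1 / 2 * c * z ^ 2 * log z) =O[L] (fun z => ‖z‖ ^ 2) := by
  set g : ℂ → ℝ := fun z => 1 + ‖log z‖
  have hratio := tendsto_div_of_relation hz (hw.mono_right nhdsWithin_le_nhds)
    (tendsto_mul_of_isBigO_sub_log hw hℓ) heq
  have hz1 : (‖·‖) =O[L] (fun _ => (1 : ℝ)) :=
    (tendsto_norm_zero.mono_left (hz.trans nhdsWithin_le_nhds)).isBigO_one ℝ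
  have hzg : (fun z => ‖z‖ * g z ^ 2) =O[L] (fun _ => (1 : ℝ)) :=
    (tendsto_norm_mul_one_add_norm_log_sq.mono_left hz).isBigO_one ℝ
  have hg : ∀ z, ‖g z‖ = 1 + ‖log z‖ := fun z => Real.norm_of_nonneg (by positivity)
  have hone : (fun _ => (1 : ℝ)) =O[L] g := isBigO_of_le _ fun z => by simp [hg]
  have hwz : w =O[L] (‖·‖) := by
    refine ((hratio.isBigO_one ℝ).mul (isBigO_norm_right.2 (isBigO_refl _ _))).congr' ?_
      (.of_eq (funext fun z => one_mul _))
    filter_upwards [hz self_mem_nhdsWithin] with z hz0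
    exact div_mul_cancel₀ _ hz0
  have hℓlog : (fun z => ℓ z - log z) =O[L] (fun _ => (1 : ℝ)) :=
    (hℓ.add (isBigO_log_sub_log_of_tendsto_div (by simp) hz hratio)).congr_left
      fun z => by ring
  have hℓg : ℓ =O[L] g :=
    ((hℓlog.trans hone).add (isBigO_of_le (f := log) _ fun z => by simp [hg])).congr_left
      fun z => by ring
  exact isBigO_sub_div_add_log_of_bounds heq hz1 hzg hwz hℓg hℓlog
    (isBigO_sub_div_of_relation heq hwz ((hwz.trans hz1).trans hone) hℓg)

end Relation

theorem Asymptotics.IsBigO.exists_pos_bound_of_nhdsWithin {α E F : Type*} [PseudoMetricSpace α]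
    [Norm E] [SeminormedAddCommGroup F] {f : α → E} {g : α → F} {s : Set α} {a : α}
    (h : f =O[𝓝[s] a] g) :
    ∃ C > 0, ∃ δ > 0, ∀ x ∈ s, dist x a < δ → ‖f x‖ ≤ C * ‖g x‖ := by
  obtain ⟨C, hC, hCfg⟩ := h.exists_pos
  obtain ⟨δ, hδ, hball⟩ := Metric.mem_nhdsWithin_iff.1 hCfg.bound
  exact ⟨C, hC, δ, hδ, fun x hx hxa => hball ⟨hxa, hx⟩⟩

theorem geodesic_pair_first_asymptotics (θ : ℝ) (U : Set ℂ)
    (hU : (0 : ℂ) ∉ U)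
    (w ℓ : ℂ → ℂ)
    (hw0 : ∀ z ∈ U, w z ≠ 0)
    (hwlim : Tendsto w (nhdsWithin 0 U) (nhds 0))
    (hℓbd : ∃ M : ℝ, ∀ z ∈ U, ‖ℓ z - Complex.log (w z)‖ ≤ M)
    (heq : ∀ z ∈ U,
      z * (1 + 2 * (Real.cos θ : ℂ) * w z * ℓ z - (w z) ^ 2) = 2 * Complex.I * w z) :
    ∃ C > (0 : ℝ), ∃ δ > (0 : ℝ), ∀ z ∈ U, ‖z‖ < δ →
      ‖w z - z / (2 * Complex.I) + (1 / 2 : ℂ) * (Real.cos θ : ℂ) * z ^ 2 * Complex.log z‖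
        ≤ C * ‖z‖ ^ 2 := by
  obtain ⟨M, hM⟩ := hℓbd
  have hz : 𝓝[U] (0 : ℂ) ≤ 𝓝[≠] 0 := nhdsWithin_mono _ fun z hz h => hU (h ▸ hz)
  have hw : Tendsto w (𝓝[U] 0) (𝓝[≠] 0) :=
    tendsto_nhdsWithin_iff.2 ⟨hwlim, eventually_nhdsWithin_of_forall hw0⟩
  have hℓ : (fun z => ℓ z - log (w z)) =O[𝓝[U] 0] (fun _ => (1 : ℝ)) :=
    .of_bound M (eventually_nhdsWithin_of_forall fun z hz => by simpa using hM z hz)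
  obtain ⟨C, hC, δ, hδ, hbound⟩ := (isBigO_sub_div_add_log_of_relation hz hw hℓ
    (eventually_nhdsWithin_of_forall heq)).exists_pos_bound_of_nhdsWithin
  exact ⟨C, hC, δ, hδ, fun z hz hzδ => by simpa using hbound z hz (by simpa using hzδ)⟩
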